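/- arXiv:2005.11560 — 3 statements merged into one kernel-verified Lean document; each statement's English description precedes it below -/
import Mathlib

section
/- Fix an index i and an index j with 1 ≤ i, j ≤ N. The partial derivative of the i-th pooling score with respect to the adjacency entry a_{ij} (all other entries of A and all of H, d held fixed) satisfies: the derivative at t = 0 of the map t ↦ S(A + t·E_{ij}, H)_i, where E_{ij} is the matrix with 1 in position (i,j) and 0 elsewhere, equals d_i · d_j · ((Ď_{row j} ∘ A_{row j}) · (H W θ)) + a_{ii} · d_i³ · d_j · (H_{row j} · (W θ)). Equivalently, ∂(S(A₀,H₀)_i − S(A,H)_i)/∂a_{ij} = −θᵀ[ d_i d_j (K H W)ᵀ + M ], where K = Ď_{row j} ∘ A_{row j} ∈ ℝ^{1×N} and M = a_{ii} d_i² (d_i d_j H_{row j} W)ᵀ ∈ ℝ^{F×1}, the term S(A₀,H₀)_i being a constant independent of a_{ij}. -/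
open Matrix BigOperators

/-- Hadamard-weighted adjacency `Ď ∘ A`, where `Ď k l = d k * d l`. -/
noncomputable def DhadA {N : ℕ} (d : Fin N → ℝ) (A : Matrix (Fin N) (Fin N) ℝ) :
    Matrix (Fin N) (Fin N) ℝ :=
  Matrix.of fun k l => d k * d l * A k l

/-- Pooling score vector `S(A,H) = (Ď∘A)((Ď∘A) H W) θ` of the surrogate model. -/
noncomputable def poolScore {N D F : ℕ} (d : Fin N → ℝ)
    (A : Matrix (Fin N) (Fin N) ℝ) (H : Matrix (Fin N) (Fin D) ℝ)
    (W : Matrix (Fin D) (Fin F) ℝ) (θ : Fin F → ℝ) : Fin N → ℝ :=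
  (DhadA d A).mulVec (((DhadA d A) * H * W).mulVec θ)

/-
The map `t ↦ Ď ∘ (A + t E_{ij})` is the affine path `Ď ∘ A + t d_i d_j E_{ij}`, and the score is
the `i`-th entry of `t ↦ (B + tE)(B + tE)u`, with `B = Ď ∘ A`, `E = d_i d_j E_{ij}` and
`u = HWθ`. The product rule gives the derivative `E B u + B E u` at `t = 0`; its `i`-th entry is
`d_i d_j (B u)_j + B_{ii} d_i d_j u_j` with `B_{ii} = d_i² a_{ii}`.
-/

section MulVecPath

variable {𝕜 : Type*} [NontriviallyNormedField 𝕜] {m n : Type*} [Fintype n]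

theorem hasDerivAt_add_smul_mulVec (B E : Matrix m n 𝕜) {v : 𝕜 → n → 𝕜} {v' : n → 𝕜} {t : 𝕜}
    (hv : HasDerivAt v v' t) :
    HasDerivAt (fun s => (B + s • E) *ᵥ v s) (E *ᵥ v t + (B + t • E) *ᵥ v') t := by
  rw [hasDerivAt_pi] at hv ⊢
  intro k
  simp only [mulVec, dotProduct, Matrix.add_apply, Matrix.smul_apply, Pi.add_apply,
    ← Finset.sum_add_distrib]
  refine HasDerivAt.fun_sum fun l _ => ?_
  have hentry : HasDerivAt (fun s => B k l + s * E k l) (E k l) t := by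
    simpa using ((hasDerivAt_id t).mul_const (E k l)).const_add (B k l)
  exact hentry.mul (hv l)

theorem hasDerivAt_add_smul_mulVec_mulVec (B E : Matrix n n 𝕜) (u : n → 𝕜) (t : 𝕜) :
    HasDerivAt (fun s => (B + s • E) *ᵥ ((B + s • E) *ᵥ u))
      (E *ᵥ ((B + t • E) *ᵥ u) + (B + t • E) *ᵥ (E *ᵥ u)) t := by
  have hlin : HasDerivAt (fun s => (B + s • E) *ᵥ u) (E *ᵥ u) t := by
    simpa using hasDerivAt_add_smul_mulVec B E (hasDerivAt_const t u)
  exact hasDerivAt_add_smul_mulVec B E hlin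

end MulVecPath

theorem DhadA_add_smul_single {N : ℕ} (d : Fin N → ℝ) (A : Matrix (Fin N) (Fin N) ℝ)
    (i j : Fin N) (t : ℝ) :
    DhadA d (A + t • single i j (1 : ℝ)) = DhadA d A + t • single i j (d i * d j) := by
  ext k l
  simp only [DhadA, Matrix.add_apply, Matrix.smul_apply, of_apply, single_apply, smul_eq_mul]
  split_ifs with hkl
  · obtain ⟨rfl, rfl⟩ := hkl
    ring
  · ring

theorem poolScore_eq_mulVec_mulVec {N D F : ℕ} (d : Fin N → ℝ) (A : Matrix (Fin N) (Fin N) ℝ)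
    (H : Matrix (Fin N) (Fin D) ℝ) (W : Matrix (Fin D) (Fin F) ℝ) (θ : Fin F → ℝ) :
    poolScore d A H W θ = DhadA d A *ᵥ (DhadA d A *ᵥ ((H * W) *ᵥ θ)) := by
  simp only [poolScore, Matrix.mul_assoc, ← mulVec_mulVec]

theorem deriv_poolScore_adj_entry_general {N D F : ℕ}
    (d : Fin N → ℝ) (A : Matrix (Fin N) (Fin N) ℝ)
    (H : Matrix (Fin N) (Fin D) ℝ) (W : Matrix (Fin D) (Fin F) ℝ)
    (θ : Fin F → ℝ) (i j : Fin N) :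
    deriv (fun t : ℝ =>
        poolScore d (A + t • Matrix.single i j (1 : ℝ)) H W θ i) 0 =
      d i * d j * (∑ k, (d j * d k * A j k) * ((H * W).mulVec θ) k)
        + A i i * (d i) ^ 3 * d j * ((H * W).mulVec θ) j := by
  set u := (H * W) *ᵥ θ
  simp only [poolScore_eq_mulVec_mulVec, DhadA_add_smul_single]
  have hderiv := hasDerivAt_pi.1
    (hasDerivAt_add_smul_mulVec_mulVec (DhadA d A) (single i j (d i * d j)) u 0) i
  rw [hderiv.deriv]
  simp only [zero_smul, add_zero, Pi.add_apply, single_mulVec_eq, mulVec_smul, mulVec_single_one,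
    Pi.smul_apply, Pi.single_eq_same, col_apply, smul_eq_mul, mul_one]
  simp only [mulVec, dotProduct, DhadA, of_apply]
  ring

/-- Theorem 1 of the paper (single-entry form): the derivative of the i-th pooling
score with respect to the adjacency entry `a_{ij}` equals
`d_i d_j ((Ď_{row j} ∘ A_{row j}) · (H W θ)) + a_{ii} d_i³ d_j (H_{row j} · (W θ))`. -/
theorem deriv_poolScore_adj_entry {N D F : ℕ} (hN : 0 < N) (hD : 0 < D) (hF : 0 < F)
    (d : Fin N → ℝ) (A : Matrix (Fin N) (Fin N) ℝ)
    (H : Matrix (Fin N) (Fin D) ℝ) (W : Matrix (Fin D) (Fin F) ℝ)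
    (θ : Fin F → ℝ) (i j : Fin N) :
    deriv (fun t : ℝ =>
        poolScore d (A + t • Matrix.single i j (1 : ℝ)) H W θ i) 0 =
      d i * d j * (∑ k, (d j * d k * A j k) * ((H * W).mulVec θ) k)
        + A i i * (d i) ^ 3 * d j * ((H * W).mulVec θ) j :=
  deriv_poolScore_adj_entry_general d A H W θ i j
end

section
/- Fix an index i with 1 ≤ i ≤ N. The gradient of the i-th pooling score S(A,H)_i with respect to the i-th feature row h_i = H_{row i} ∈ ℝ^{D} (all entries of A, the other rows of H, and d held fixed) satisfies: for every direction v ∈ ℝ^{D}, the derivative at t = 0 of the map t ↦ S(A, H + t·e_i vᵀ)_i, where e_i ∈ ℝ^{N} is the i-th standard basis vector, equals the inner product ⟨(Ď²_{row i} · (A_{row i}ᵀ ∘ A_{col i})) · (W θ), v⟩, where Ď²_{row i} · (A_{row i}ᵀ ∘ A_{col i}) = Σ_{k=1}^{N} d_i² d_k² a_{ik} a_{ki} is a scalar. Equivalently, ∂(S(A₀,H₀)_i − S(A,H)_i)/∂h_i = −(Ď²_{row i}(A_{row i}ᵀ ∘ A_{col i}) ⊙ W) θ, where ⊙ denotes multiplication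 of the matrix W by that scalar, the term S(A₀,H₀)_i being a constant independent of h_i. -/
open Matrix BigOperators

/-! The score is linear in `H`, so its derivative along the line `H + t • E` is the score of `E`.
For the rank-one direction `E = e_i vᵀ` that score factors as `(v ⬝ᵥ W θ) • (Ď∘A)² e_i`, whose
`i`-th entry is the diagonal entry `((Ď∘A)²)_{ii} = Σ_k d_i² d_k² a_{ik} a_{ki}`. -/

section

variable {N D F : ℕ} (d : Fin N → ℝ) (A : Matrix (Fin N) (Fin N) ℝ)
  (W : Matrix (Fin D) (Fin F) ℝ) (θ : Fin F → ℝ)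

theorem poolScore_add (H H' : Matrix (Fin N) (Fin D) ℝ) :
    poolScore d A (H + H') W θ = poolScore d A H W θ + poolScore d A H' W θ := by
  simp only [poolScore, Matrix.mul_add, Matrix.add_mul, Matrix.add_mulVec, Matrix.mulVec_add]

theorem poolScore_smul (t : ℝ) (H : Matrix (Fin N) (Fin D) ℝ) :
    poolScore d A (t • H) W θ = t • poolScore d A H W θ := by
  simp only [poolScore, Matrix.mul_smul, Matrix.smul_mul, Matrix.smul_mulVec, Matrix.mulVec_smul]

theorem poolScore_vecMulVec (u : Fin N → ℝ) (v : Fin D → ℝ) :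
    poolScore d A (vecMulVec u v) W θ = (v ⬝ᵥ W *ᵥ θ) • (DhadA d A * DhadA d A) *ᵥ u := by
  rw [poolScore, Matrix.mul_vecMulVec, Matrix.vecMulVec_mul, Matrix.vecMulVec_mulVec,
    ← Matrix.dotProduct_mulVec, op_smul_eq_smul, Matrix.mulVec_smul, Matrix.mulVec_mulVec]

theorem hasDerivAt_poolScore_line (H E : Matrix (Fin N) (Fin D) ℝ) (i : Fin N) (s : ℝ) :
    HasDerivAt (fun t : ℝ => poolScore d A (H + t • E) W θ i) (poolScore d A E W θ i) s := by
  simp only [poolScore_add, poolScore_smul, Pi.add_apply, Pi.smul_apply, smul_eq_mul]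
  simpa using ((hasDerivAt_id s).mul_const (poolScore d A E W θ i)).const_add
    (poolScore d A H W θ i)

theorem DhadA_mul_self_apply_diag (i : Fin N) :
    (DhadA d A * DhadA d A) i i = ∑ k, d i ^ 2 * d k ^ 2 * A i k * A k i := by
  simp only [Matrix.mul_apply, DhadA, Matrix.of_apply]
  exact Finset.sum_congr rfl fun k _ => by ring

end

theorem deriv_poolScore_feature_row_general {N D F : ℕ}
    (d : Fin N → ℝ) (A : Matrix (Fin N) (Fin N) ℝ)
    (H : Matrix (Fin N) (Fin D) ℝ) (W : Matrix (Fin D) (Fin F) ℝ)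
    (θ : Fin F → ℝ) (i : Fin N) (v : Fin D → ℝ) :
    deriv (fun t : ℝ =>
        poolScore d A (H + t • Matrix.vecMulVec (Pi.single i (1 : ℝ)) v) W θ i) 0 =
      (∑ k, (d i) ^ 2 * (d k) ^ 2 * A i k * A k i) * (∑ m, W.mulVec θ m * v m) := by
  rw [(hasDerivAt_poolScore_line d A W θ H _ i 0).deriv, poolScore_vecMulVec,
    Matrix.mulVec_single_one, Pi.smul_apply, smul_eq_mul, Matrix.col_apply,
    DhadA_mul_self_apply_diag, mul_comm, dotProduct_comm]
  rfl

/-- Theorem 2 of the paper: the directional derivative of the i-th pooling score with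
respect to the i-th feature row `h_i`, in any direction `v ∈ ℝ^D` (perturbing `H` by
`t · e_i vᵀ`), equals `⟨c · (W θ), v⟩` where
`c = Ď²_{row i} · (A_{row i}ᵀ ∘ A_{col i}) = Σ_k d_i² d_k² a_{ik} a_{ki}`. -/
theorem deriv_poolScore_feature_row {N D F : ℕ} (hN : 0 < N) (hD : 0 < D) (hF : 0 < F)
    (d : Fin N → ℝ) (A : Matrix (Fin N) (Fin N) ℝ)
    (H : Matrix (Fin N) (Fin D) ℝ) (W : Matrix (Fin D) (Fin F) ℝ)
    (θ : Fin F → ℝ) (i : Fin N) (v : Fin D → ℝ) :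
    deriv (fun t : ℝ =>
        poolScore d A (H + t • Matrix.vecMulVec (Pi.single i (1 : ℝ)) v) W θ i) 0 =
      (∑ k, (d i) ^ 2 * (d k) ^ 2 * A i k * A k i) * (∑ m, W.mulVec θ m * v m) :=
  deriv_poolScore_feature_row_general d A H W θ i v
end

section
/- Fix an index i with 1 ≤ i ≤ N and set c = Σ_{k=1}^{N} d_i² d_k² a_{ik} a_{ki} ∈ ℝ. Then the gradient of the map h ↦ S(A, H[i := h])_i, sending a row vector h ∈ ℝ^{D} to the i-th pooling score of the feature matrix obtained from H by replacing its i-th row with h, is the constant vector c · (W θ) ∈ ℝ^{D}; in particular this map is affine in h with linear part h ↦ c · (h · W θ). -/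
open Matrix BigOperators

lemma sum3_comm {α β γ : Type*} [Fintype α] [Fintype β] [Fintype γ]
    (f : α → β → γ → ℝ) :
    ∑ x : α, ∑ y : β, ∑ z : γ, f x y z = ∑ z : γ, ∑ y : β, ∑ x : α, f x y z := by
  calc ∑ x : α, ∑ y : β, ∑ z : γ, f x y z
      = ∑ y : β, ∑ x : α, ∑ z : γ, f x y z := Finset.sum_comm
    _ = ∑ y : β, ∑ z : γ, ∑ x : α, f x y z :=
        Finset.sum_congr rfl fun y _ => Finset.sum_comm
    _ = ∑ z : γ, ∑ y : β, ∑ x : α, f x y z := Finset.sum_comm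

lemma poolScore_key {N D F : ℕ} (d : Fin N → ℝ) (A : Matrix (Fin N) (Fin N) ℝ)
    (H : Matrix (Fin N) (Fin D) ℝ) (W : Matrix (Fin D) (Fin F) ℝ)
    (θ : Fin F → ℝ) (i : Fin N) (h : Fin D → ℝ) :
    poolScore d A (H.updateRow i h) W θ i =
      poolScore d A (H.updateRow i 0) W θ i
        + (∑ k, (d i) ^ 2 * (d k) ^ 2 * A i k * A k i) * (h ⬝ᵥ W.mulVec θ) := by
  have split : ∀ (j : Fin N) (m : Fin D),
      (if j = i then h m else H j m) = (if j = i then (0:ℝ) else H j m) + (if j = i then h m else 0) := by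
    intro j m; split <;> simp
  simp only [poolScore, DhadA, mulVec, dotProduct, Matrix.mul_apply, Matrix.of_apply,
    Finset.sum_mul, Finset.mul_sum, Matrix.updateRow_apply, Pi.zero_apply, split,
    mul_add, add_mul, Finset.sum_add_distrib]
  congr 1
  · simp only [mul_ite, ite_mul, mul_zero, zero_mul, Finset.sum_ite_eq', Finset.mem_univ, if_true]
    rw [sum3_comm]
    refine Finset.sum_congr rfl fun x2 _ => Finset.sum_congr rfl fun x1 _ =>
      Finset.sum_congr rfl fun l _ => ?_
    ring

/-- Scalar form of Theorem 2 of the paper (Eq. (24)): with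
`c = Σ_k d_i² d_k² a_{ik} a_{ki}`, the map `h ↦ S(A, H[i := h])_i` has gradient the
constant vector `c • (W θ)` (i.e. its derivative at any point in any direction `v`
is `c * ⟨v, W θ⟩`); in particular it is affine in `h` with linear part
`h ↦ c * (h · W θ)`. -/
theorem poolScore_feature_row_affine {N D F : ℕ} (hN : 0 < N) (hD : 0 < D) (hF : 0 < F)
    (d : Fin N → ℝ) (A : Matrix (Fin N) (Fin N) ℝ)
    (H : Matrix (Fin N) (Fin D) ℝ) (W : Matrix (Fin D) (Fin F) ℝ)
    (θ : Fin F → ℝ) (i : Fin N) :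
    (∀ (h v : Fin D → ℝ),
        fderiv ℝ (fun h' : Fin D → ℝ => poolScore d A (H.updateRow i h') W θ i) h v =
          (∑ k, (d i) ^ 2 * (d k) ^ 2 * A i k * A k i) * (v ⬝ᵥ W.mulVec θ)) ∧
    (∀ h : Fin D → ℝ,
        poolScore d A (H.updateRow i h) W θ i =
          poolScore d A (H.updateRow i 0) W θ i
            + (∑ k, (d i) ^ 2 * (d k) ^ 2 * A i k * A k i) * (h ⬝ᵥ W.mulVec θ)) := by
  set c := ∑ k, (d i) ^ 2 * (d k) ^ 2 * A i k * A k i with hc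
  set w := W.mulVec θ with hw
  refine ⟨?_, fun h => poolScore_key d A H W θ i h⟩
  intro h v
  have hfun : (fun h' : Fin D → ℝ => poolScore d A (H.updateRow i h') W θ i) =
      fun h' => poolScore d A (H.updateRow i 0) W θ i + c * (h' ⬝ᵥ w) :=
    funext fun h' => poolScore_key d A H W θ i h'
  let L : (Fin D → ℝ) →ₗ[ℝ] ℝ :=
    { toFun := fun u => c * (u ⬝ᵥ w)
      map_add' := by intro a b; simp [add_dotProduct, mul_add]
      map_smul' := by intro r a; simp [smul_dotProduct, smul_eq_mul]; ring }
  have hL : HasFDerivAt (fun h' : Fin D → ℝ =>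
      poolScore d A (H.updateRow i 0) W θ i + c * (h' ⬝ᵥ w)) L.toContinuousLinearMap h := by
    have := L.toContinuousLinearMap.hasFDerivAt (x := h)
    exact this.const_add _
  rw [hfun, hL.fderiv]
  rfl
end
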